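/- Theorem 5 (ρ_{S3} for 2-D mapping): let N = 2M with M ≥ 3, let σ be a uniformly random permutation of Fin N, X_i = u (σ i), and define the symbol energy E_w = X_{2w}² + X_{2w+1}² for w : Fin M. Then for any three pairwise distinct symbol times w, w', w'', E[E_w · E_{w'} · E_{w''}] = 8ρ₃, where ρ₃ = (N²·m₂³ − 3N·m₂·m₄ + 2·m₆)/((N − 1)(N − 2)). -/

import Mathlib

/-- Expectation of a real-valued random variable on the finite probability space
`Equiv.Perm (Fin N)` equipped with the uniform probability measure. -/
noncomputable def permExpect (N : ℕ) (f : Equiv.Perm (Fin N) → ℝ) : ℝ :=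
  (∑ σ : Equiv.Perm (Fin N), f σ) / (Fintype.card (Equiv.Perm (Fin N)) : ℝ)

/-- Empirical `k`-th moment of the amplitude block `u`. -/
noncomputable def empMoment (N : ℕ) (u : Fin N → ℝ) (k : ℕ) : ℝ :=
  (1 / (N : ℝ)) * ∑ i : Fin N, (u i) ^ k

/-- Symbol energy under 2-D mapping: `E_w = X_{2w}² + X_{2w+1}²` with `X_i = u (σ i)`,
for a block of length `N = 2M`. -/
noncomputable def energy2D (M : ℕ) (u : Fin (2 * M) → ℝ)
    (σ : Equiv.Perm (Fin (2 * M))) (w : Fin M) : ℝ :=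
  (u (σ ⟨2 * w.val, by have := w.isLt; omega⟩)) ^ 2
    + (u (σ ⟨2 * w.val + 1, by have := w.isLt; omega⟩)) ^ 2

/-! For pairwise distinct positions `a, b, c`, the triple `(σ a, σ b, σ c)` of a uniform
permutation `σ` is a uniform injective triple, because permutations act transitively on
embeddings `Fin 3 ↪ α` (double counting over the orbit). Summing `f x * f y * f z` over injective
triples gives `p₁³ - 3 p₁ p₂ + 2 p₃` in the power sums `pₖ = ∑ f ^ k`, so with `f = u²` each product
`X_a² X_b² X_c²` has expectation `ρ₃`. The product of three distinct symbol energies expands into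
`2³ = 8` such products, since the six in-phase and quadrature positions involved are distinct. -/

open Finset Equiv

theorem MulAction.card_nsmul_sum_smul {G X M : Type*} [Group G] [Fintype G] [MulAction G X]
    [Fintype X] [MulAction.IsPretransitive G X] [AddCommMonoid M] (F : X → M) (x : X) :
    Fintype.card X • ∑ g : G, F (g • x) = Fintype.card G • ∑ y, F y := by
  have orbit_sum_const : ∀ y : X, ∑ g : G, F (g • y) = ∑ g : G, F (g • x) := by
    intro y
    obtain ⟨h, rfl⟩ := MulAction.exists_smul_eq G x y
    exact Fintype.sum_equiv (Equiv.mulRight h) _ _ fun g => by simp [mul_smul]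
  calc Fintype.card X • ∑ g : G, F (g • x) = ∑ y : X, ∑ g : G, F (g • y) := by
        simp [orbit_sum_const]
    _ = ∑ g : G, ∑ y, F (g • y) := Finset.sum_comm
    _ = ∑ g : G, ∑ y, F y := sum_congr rfl fun g _ => Equiv.sum_comp (MulAction.toPerm g) F
    _ = Fintype.card G • ∑ y, F y := by simp

theorem sum_embedding_fin_succ {α M : Type*} [Fintype α] [DecidableEq α] [AddCommGroup M]
    (n : ℕ) (F : (Fin (n + 1) → α) → M) :
    ∑ e : Fin (n + 1) ↪ α, F e
      = ∑ e : Fin n ↪ α, (∑ a, F (Fin.cons a e) - ∑ j, F (Fin.cons (e j) e)) := by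
  rw [← (Equiv.embeddingFinSucc n α).symm.sum_comp, Fintype.sum_sigma]
  refine sum_congr rfl fun e _ => ?_
  simp only [Equiv.coe_embeddingFinSucc_symm]
  rw [eq_sub_iff_add_eq, ← Fintype.sum_subtype_add_sum_subtype (· ∈ Set.range e), add_comm]
  congr 1
  convert Fintype.sum_equiv (Equiv.ofInjective e e.injective) (fun j => F (Fin.cons (e j) e))
    (fun a : Set.range e => F (Fin.cons (a : α) e)) fun j => rfl

theorem sum_embedding_fin_three {α R : Type*} [Fintype α] [DecidableEq α] [CommRing R]
    (f : α → R) :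
    ∑ e : Fin 3 ↪ α, ∏ i, f (e i)
      = (∑ a, f a) ^ 3 - 3 * (∑ a, f a) * ∑ a, f a ^ 2 + 2 * ∑ a, f a ^ 3 := by
  set p₁ := ∑ a, f a
  set p₂ := ∑ a, f a ^ 2
  set p₃ := ∑ a, f a ^ 3
  have peel_third : ∀ e : Fin 2 ↪ α, ∑ a, ∏ i, f ((Fin.cons a e : Fin 3 → α) i)
        - ∑ j, ∏ i, f ((Fin.cons (e j) e : Fin 3 → α) i)
      = (p₁ - (f (e 0) + f (e 1))) * (f (e 0) * f (e 1)) := by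
    intro e
    simp only [Fin.prod_univ_succ, Fin.cons_zero, Fin.cons_succ, Fin.succ_zero_eq_one,
      Fin.prod_univ_zero, mul_one, ← sum_mul, Fin.sum_univ_two, p₁]
    ring
  have peel_second : ∀ c : α,
      ∑ b, (p₁ - (f b + f c)) * (f b * f c) - (p₁ - (f c + f c)) * (f c * f c)
        = f c * (p₁ ^ 2 - p₂) - 2 * p₁ * f c ^ 2 + 2 * f c ^ 3 := by
    intro c
    have summand : ∀ b, (p₁ - (f b + f c)) * (f b * f c)
        = f c * p₁ * f b - f c * f b ^ 2 - f c ^ 2 * f b := fun b => by ring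
    simp only [summand, sum_sub_distrib, ← mul_sum]
    ring
  calc ∑ e : Fin 3 ↪ α, ∏ i, f (e i)
      = ∑ e : Fin 2 ↪ α, (p₁ - (f (e 0) + f (e 1))) * (f (e 0) * f (e 1)) := by
        rw [sum_embedding_fin_succ 2 fun e => ∏ i, f (e i)]
        exact sum_congr rfl fun e _ => peel_third e
    _ = ∑ e : Fin 1 ↪ α,
          (f (e 0) * (p₁ ^ 2 - p₂) - 2 * p₁ * f (e 0) ^ 2 + 2 * f (e 0) ^ 3) := by
        rw [sum_embedding_fin_succ 1 fun g => (p₁ - (f (g 0) + f (g 1))) * (f (g 0) * f (g 1))]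
        refine sum_congr rfl fun e _ => ?_
        simpa using peel_second (e 0)
    _ = ∑ c, (f c * (p₁ ^ 2 - p₂) - 2 * p₁ * f c ^ 2 + 2 * f c ^ 3) :=
        Fintype.sum_equiv Equiv.uniqueEmbeddingEquivResult _ _ fun e => rfl
    _ = p₁ ^ 3 - 3 * p₁ * p₂ + 2 * p₃ := by
        simp only [sum_add_distrib, sum_sub_distrib, ← sum_mul, ← mul_sum]
        ring

theorem descFactorial_mul_sum_perm_mul_mul {α R : Type*} [Fintype α] [DecidableEq α]
    [CommRing R] (f : α → R) {a b c : α} (hab : a ≠ b) (hac : a ≠ c) (hbc : b ≠ c) :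
    ((Fintype.card α).descFactorial 3 : R) * ∑ σ : Perm α, f (σ a) * f (σ b) * f (σ c)
      = (Fintype.card α).factorial
          * ((∑ x, f x) ^ 3 - 3 * (∑ x, f x) * ∑ x, f x ^ 2 + 2 * ∑ x, f x ^ 3) := by
  let x : Fin 3 ↪ α := ⟨![a, b, c], by
    intro i j
    fin_cases i <;> fin_cases j <;> simp [hab, hac, hbc, hab.symm, hac.symm, hbc.symm]⟩
  have := Equiv.Perm.isMultiplyPretransitive α 3
  have h := MulAction.card_nsmul_sum_smul (G := Perm α) (fun e : Fin 3 ↪ α => ∏ i, f (e i)) x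
  rw [Fintype.card_embedding_eq, Fintype.card_fin, Fintype.card_perm, sum_embedding_fin_three,
    nsmul_eq_mul, nsmul_eq_mul] at h
  have hx : x 0 = a ∧ x 1 = b ∧ x 2 = c := ⟨rfl, rfl, rfl⟩
  simpa [Fin.prod_univ_three, hx] using h

theorem permExpect_sum {ι : Type*} (N : ℕ) (s : Finset ι) (g : ι → Perm (Fin N) → ℝ) :
    permExpect N (fun σ => ∑ i ∈ s, g i σ) = ∑ i ∈ s, permExpect N (g i) := by
  simp only [permExpect, Finset.sum_comm (s := univ), Finset.sum_div]

theorem three_le_of_ne {N : ℕ} {a b c : Fin N} (hab : a ≠ b) (hac : a ≠ c) (hbc : b ≠ c) :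
    3 ≤ N := by
  have := Fin.val_ne_of_ne hab
  have := Fin.val_ne_of_ne hac
  have := Fin.val_ne_of_ne hbc
  omega

theorem permExpect_mul_mul {N : ℕ} (f : Fin N → ℝ) {a b c : Fin N}
    (hab : a ≠ b) (hac : a ≠ c) (hbc : b ≠ c) :
    permExpect N (fun σ => f (σ a) * f (σ b) * f (σ c))
      = ((∑ x, f x) ^ 3 - 3 * (∑ x, f x) * ∑ x, f x ^ 2 + 2 * ∑ x, f x ^ 3)
        / (N * (N - 1) * (N - 2)) := by
  have hN := three_le_of_ne hab hac hbc
  have hdesc : (N.descFactorial 3 : ℝ) = N * (N - 1) * (N - 2) := by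
    simp only [Nat.descFactorial_succ, Nat.descFactorial_zero, Nat.sub_zero]
    push_cast [Nat.cast_sub (show 2 ≤ N by omega), Nat.cast_sub (show 1 ≤ N by omega)]
    ring
  have hpos : (0 : ℝ) < N * (N - 1) * (N - 2) := by
    rw [← hdesc]
    exact_mod_cast Nat.descFactorial_pos.mpr hN
  have h := descFactorial_mul_sum_perm_mul_mul f hab hac hbc
  rw [Fintype.card_fin, hdesc] at h
  rw [permExpect, Fintype.card_perm, Fintype.card_fin,
    div_eq_div_iff (by positivity) hpos.ne']
  linear_combination h

theorem sum_pow_eq_mul_empMoment {N : ℕ} (u : Fin N → ℝ) (hN : N ≠ 0) (k : ℕ) :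
    ∑ i, u i ^ k = N * empMoment N u k := by
  rw [empMoment]
  field_simp

theorem permExpect_sq_mul_sq_mul_sq {N : ℕ} (u : Fin N → ℝ) {a b c : Fin N}
    (hab : a ≠ b) (hac : a ≠ c) (hbc : b ≠ c) :
    permExpect N (fun σ => u (σ a) ^ 2 * u (σ b) ^ 2 * u (σ c) ^ 2)
      = ((N : ℝ) ^ 2 * empMoment N u 2 ^ 3 - 3 * N * empMoment N u 2 * empMoment N u 4
          + 2 * empMoment N u 6) / ((N - 1) * (N - 2)) := by
  have hN := three_le_of_ne hab hac hbc
  have hN₀ : (N : ℝ) ≠ 0 := by norm_cast; omega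
  have hN₁ : (N : ℝ) - 1 ≠ 0 := by
    rw [sub_ne_zero]; norm_cast; omega
  have hN₂ : (N : ℝ) - 2 ≠ 0 := by
    rw [sub_ne_zero]; norm_cast; omega
  rw [permExpect_mul_mul (fun i => u i ^ 2) hab hac hbc]
  simp only [← pow_mul, sum_pow_eq_mul_empMoment u (show N ≠ 0 by omega)]
  norm_num
  field_simp

def componentIndex {M : ℕ} (w : Fin M) (r : Fin 2) : Fin (2 * M) :=
  ⟨2 * w + r, by omega⟩

theorem componentIndex_ne {M : ℕ} {w w' : Fin M} (h : w ≠ w') (r s : Fin 2) :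
    componentIndex w r ≠ componentIndex w' s := by
  intro h'
  have := congrArg Fin.val h'
  simp only [componentIndex] at this
  omega

theorem energy2D_eq_sum (M : ℕ) (u : Fin (2 * M) → ℝ) (σ : Perm (Fin (2 * M))) (w : Fin M) :
    energy2D M u σ w = ∑ r : Fin 2, u (σ (componentIndex w r)) ^ 2 := by
  simp [energy2D, componentIndex, Fin.sum_univ_two]

theorem energy2D_mul_mul_eq_sum (M : ℕ) (u : Fin (2 * M) → ℝ) (σ : Perm (Fin (2 * M)))
    (w w' w'' : Fin M) :
    energy2D M u σ w * energy2D M u σ w' * energy2D M u σ w''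
      = ∑ r, ∑ s, ∑ t, u (σ (componentIndex w r)) ^ 2 * u (σ (componentIndex w' s)) ^ 2
          * u (σ (componentIndex w'' t)) ^ 2 := by
  rw [energy2D_eq_sum, energy2D_eq_sum, energy2D_eq_sum, sum_mul_sum, sum_mul]
  simp only [sum_mul_sum]

theorem rhoS3_twoD_general (M : ℕ) (u : Fin (2 * M) → ℝ)
    (w w' w'' : Fin M) (h1 : w ≠ w') (h2 : w ≠ w'') (h3 : w' ≠ w'') :
    permExpect (2 * M)
        (fun σ => energy2D M u σ w * energy2D M u σ w' * energy2D M u σ w'')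
      = 8 * ((((2 * M : ℕ) : ℝ) ^ 2 * (empMoment (2 * M) u 2) ^ 3
              - 3 * ((2 * M : ℕ) : ℝ) * empMoment (2 * M) u 2 * empMoment (2 * M) u 4
              + 2 * empMoment (2 * M) u 6)
            / ((((2 * M : ℕ) : ℝ) - 1) * (((2 * M : ℕ) : ℝ) - 2))) := by
  simp only [energy2D_mul_mul_eq_sum, permExpect_sum,
    permExpect_sq_mul_sq_mul_sq u, componentIndex_ne h1, componentIndex_ne h2,
    componentIndex_ne h3, ne_eq, not_false_eq_true, sum_const, card_univ, Fintype.card_fin,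
    nsmul_eq_mul, Nat.cast_ofNat]
  ring

/-- Theorem 5 (ρ_{S3} for 2-D mapping): for `N = 2M`, `M ≥ 3`, and pairwise distinct
symbol times `w, w', w''`, `E[E_w·E_{w'}·E_{w''}] = 8ρ₃` with
`ρ₃ = (N²·m₂³ − 3N·m₂·m₄ + 2·m₆)/((N−1)(N−2))`. -/
theorem rhoS3_twoD (M : ℕ) (hM : 3 ≤ M) (u : Fin (2 * M) → ℝ)
    (w w' w'' : Fin M) (h1 : w ≠ w') (h2 : w ≠ w'') (h3 : w' ≠ w'') :
    permExpect (2 * M)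
        (fun σ => energy2D M u σ w * energy2D M u σ w' * energy2D M u σ w'')
      = 8 * ((((2 * M : ℕ) : ℝ) ^ 2 * (empMoment (2 * M) u 2) ^ 3
              - 3 * ((2 * M : ℕ) : ℝ) * empMoment (2 * M) u 2 * empMoment (2 * M) u 4
              + 2 * empMoment (2 * M) u 6)
            / ((((2 * M : ℕ) : ℝ) - 1) * (((2 * M : ℕ) : ℝ) - 2))) :=
  rhoS3_twoD_general M u w w' w'' h1 h2 h3
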